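/- Let C ⊆ ℝ^N be nonempty closed convex, F monotone and ℓ-Lipschitz, η > 0, and u* ∈ C a point with ⟨F(u*), u - u*⟩ ≥ 0 for all u ∈ C. If ū = P_C(v - ηF(ū)) for some v ∈ ℝ^N, then ‖ū - u*‖² ≤ ‖v - u*‖² - 2η⟨F(ū), ū - u*⟩. -/
import Mathlib


open RealInnerProductSpace

theorem stmt_8 {N : ℕ} (C : Set (EuclideanSpace ℝ (Fin N)))
    (hC : C.Nonempty) (hclosed : IsClosed C) (hconv : Convex ℝ C)
    (P : EuclideanSpace ℝ (Fin N) → EuclideanSpace ℝ (Fin N))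
    (hP : ∀ x, P x ∈ C ∧ ∀ w ∈ C, ⟪x - P x, w - P x⟫ ≤ 0)
    (F : EuclideanSpace ℝ (Fin N) → EuclideanSpace ℝ (Fin N)) (ℓ : ℝ)
    (hmono : ∀ u v, 0 ≤ ⟪F u - F v, u - v⟫)
    (hF : ∀ u u', ‖F u - F u'‖ ≤ ℓ * ‖u - u'‖)
    (η : ℝ) (hη : 0 < η)
    (ustar : EuclideanSpace ℝ (Fin N)) (hustar : ustar ∈ C)
    (hVI : ∀ u ∈ C, 0 ≤ ⟪F ustar, u - ustar⟫)
    (v ubar : EuclideanSpace ℝ (Fin N))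
    (hu : ubar = P (v - η • F ubar)) :
    ‖ubar - ustar‖ ^ 2 ≤ ‖v - ustar‖ ^ 2 - 2 * η * ⟪F ubar, ubar - ustar⟫ := by
  have key := (hP (v - η • F ubar)).2 ustar hustar
  rw [← hu] at key
  have e1 : v - ustar = (v - ubar) + (ubar - ustar) := by abel
  have e2 : ‖(v - ubar) + (ubar - ustar)‖ ^ 2
      = ‖v - ubar‖ ^ 2 + 2 * ⟪v - ubar, ubar - ustar⟫ + ‖ubar - ustar‖ ^ 2 :=
    norm_add_sq_real _ _
  have e3 : ⟪v - η • F ubar - ubar, ustar - ubar⟫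
      = -⟪v - ubar, ubar - ustar⟫ + η * ⟪F ubar, ubar - ustar⟫ := by
    rw [show v - η • F ubar - ubar = (v - ubar) - η • F ubar by abel,
      show ustar - ubar = -(ubar - ustar) by abel, inner_neg_right,
      inner_sub_left, real_inner_smul_left]
    ring
  rw [e1, e2]
  nlinarith [sq_nonneg ‖v - ubar‖]
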